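/- arXiv:0803.0690 — 2 statements merged into one kernel-verified Lean document; each statement's English description precedes it below -/
import Mathlib

section
/- Let τ ∈ ℂ with Im τ > 0, set σ = √(Im τ), and let L = ℤ·(σ⁻¹τ) + ℤ·(σ⁻¹) ⊂ ℂ ≅ ℝ² (a lattice of covolume 1). Then for every continuous L-periodic function f : ℝ² → ℝ with f > 0, the metric g = f²(dx²+dy²) satisfies area(g) − σ²·sys(g)² ≥ var(f). -/
/-!
In the coordinates `(s, t) ↦ (s + tτ)/σ` of the fundamental parallelogram, `var = area - mean²`
is the variance formula for the uniform probability measure on the unit square. For each `t`, the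
segment `s ↦ (s + tτ)/σ` joins a point to its translate by the lattice vector `1/σ`, so its length
`σ⁻¹ ∫ f ds` bounds the systole from above; averaging over `t` gives `σ · sys ≤ mean`, and hence
`σ² sys² ≤ mean² = area - var`.
-/

open MeasureTheory intervalIntegral

/-- A path `γ : [0,1] → ℂ ≅ ℝ²` is piecewise `C¹` with derivative `γ'` if it is continuous
on `[0,1]` and there is a finite partition `0 = t₀ < t₁ < ⋯ < tₙ = 1` such that on each
closed piece the derivative of `γ` extends to a continuous function agreeing with `γ'`
in the interior of the piece. -/
def IsPiecewiseC1Path (γ γ' : ℝ → ℂ) : Prop :=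
  ContinuousOn γ (Set.Icc 0 1) ∧
  ∃ (n : ℕ) (t : ℕ → ℝ), 0 < n ∧ t 0 = 0 ∧ t n = 1 ∧
    (∀ i < n, t i < t (i + 1)) ∧
    ∀ i < n, ∃ d : ℝ → ℂ, ContinuousOn d (Set.Icc (t i) (t (i + 1))) ∧
      ∀ x ∈ Set.Ioo (t i) (t (i + 1)), HasDerivAt γ (d x) x ∧ γ' x = d x

/-- The length of a path `γ` with derivative `γ'` in the conformal metric `f²(dx²+dy²)`. -/
noncomputable def gLength (f : ℂ → ℝ) (γ γ' : ℝ → ℂ) : ℝ :=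
  ∫ t in (0:ℝ)..1, f (γ t) * ‖γ' t‖

/-- The systole of the metric `f²(dx²+dy²)` on the torus `ℝ²/L`: the infimum of lengths of
piecewise `C¹` paths whose endpoint difference is a nonzero lattice vector. -/
noncomputable def systole (L : Set ℂ) (f : ℂ → ℝ) : ℝ :=
  sInf { ℓ : ℝ | ∃ γ γ' : ℝ → ℂ, IsPiecewiseC1Path γ γ' ∧
    γ 1 - γ 0 ∈ L ∧ γ 1 - γ 0 ≠ 0 ∧ ℓ = gLength f γ γ' }

section UnitSquare

variable {a b c d : ℝ}

theorem integrable_prod_restrict_Ioc_of_continuous {g : ℝ × ℝ → ℝ} (hg : Continuous g) :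
    Integrable g ((volume.restrict (Set.Ioc a b)).prod (volume.restrict (Set.Ioc c d))) := by
  rw [Measure.prod_restrict, ← Measure.volume_eq_prod]
  exact (hg.continuousOn.integrableOn_compact (isCompact_Icc.prod isCompact_Icc)).mono_set
    (Set.prod_mono Set.Ioc_subset_Icc_self Set.Ioc_subset_Icc_self)

theorem intervalIntegral_intervalIntegral_eq_integral_prod {F : ℝ → ℝ → ℝ}
    (hF : Continuous F.uncurry) (hab : a ≤ b) (hcd : c ≤ d) :
    ∫ s in a..b, ∫ t in c..d, F s t =
      ∫ p, F.uncurry p ∂(volume.restrict (Set.Ioc a b)).prod (volume.restrict (Set.Ioc c d)) := by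
  rw [integral_prod _ (integrable_prod_restrict_Ioc_of_continuous hF), integral_of_le hab]
  simp_rw [integral_of_le hcd]
  rfl

instance : IsProbabilityMeasure (volume.restrict (Set.Ioc (0 : ℝ) 1)) := ⟨by simp⟩

theorem intervalIntegral_unitSquare_sub_mean_sq {F : ℝ → ℝ → ℝ} (hF : Continuous F.uncurry) :
    ∫ s in (0:ℝ)..1, ∫ t in (0:ℝ)..1, (F s t - ∫ s in (0:ℝ)..1, ∫ t in (0:ℝ)..1, F s t) ^ 2 =
      (∫ s in (0:ℝ)..1, ∫ t in (0:ℝ)..1, F s t ^ 2) -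
        (∫ s in (0:ℝ)..1, ∫ t in (0:ℝ)..1, F s t) ^ 2 := by
  set m := ∫ s in (0:ℝ)..1, ∫ t in (0:ℝ)..1, F s t
  have hX : MemLp F.uncurry 2 ((volume.restrict (Set.Ioc (0 : ℝ) 1)).prod
      (volume.restrict (Set.Ioc (0 : ℝ) 1))) :=
    (memLp_two_iff_integrable_sq hF.aestronglyMeasurable).2
      (integrable_prod_restrict_Ioc_of_continuous (hF.pow 2))
  have hsq : Continuous (Function.uncurry fun s t => F s t ^ 2) := hF.pow 2
  have hdev : Continuous (Function.uncurry fun s t => (F s t - m) ^ 2) :=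
    (hF.sub continuous_const).pow 2
  rw [intervalIntegral_intervalIntegral_eq_integral_prod hdev zero_le_one zero_le_one,
    intervalIntegral_intervalIntegral_eq_integral_prod hsq zero_le_one zero_le_one,
    show m = _ from intervalIntegral_intervalIntegral_eq_integral_prod hF zero_le_one zero_le_one]
  exact (ProbabilityTheory.variance_eq_integral hX.aemeasurable).symm.trans
    (ProbabilityTheory.variance_eq_sub hX)

end UnitSquare

section Systole

variable {L : Set ℂ} {f : ℂ → ℝ}

theorem gLength_nonneg (hf : ∀ z, 0 ≤ f z) (γ γ' : ℝ → ℂ) : 0 ≤ gLength f γ γ' :=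
  integral_nonneg zero_le_one fun _ _ => mul_nonneg (hf _) (norm_nonneg _)

theorem systole_nonneg (hf : ∀ z, 0 ≤ f z) : 0 ≤ systole L f :=
  Real.sInf_nonneg <| by
    rintro _ ⟨γ, γ', -, -, -, rfl⟩
    exact gLength_nonneg hf γ γ'

theorem systole_le_gLength (hf : ∀ z, 0 ≤ f z) {γ γ' : ℝ → ℂ} (hγ : IsPiecewiseC1Path γ γ')
    (hL : γ 1 - γ 0 ∈ L) (h0 : γ 1 - γ 0 ≠ 0) : systole L f ≤ gLength f γ γ' := by
  refine csInf_le ⟨0, ?_⟩ ⟨γ, γ', hγ, hL, h0, rfl⟩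
  rintro _ ⟨γ, γ', -, -, -, rfl⟩
  exact gLength_nonneg hf γ γ'

theorem isPiecewiseC1Path_affine (v a : ℂ) :
    IsPiecewiseC1Path (fun u : ℝ => u * v + a) (fun _ => v) := by
  have hderiv (x : ℝ) : HasDerivAt (fun u : ℝ => (u : ℂ) * v + a) v x := by
    simpa using (((hasDerivAt_id x).ofReal_comp).mul_const v).add_const a
  refine ⟨Continuous.continuousOn (by fun_prop), 1, fun i => i, one_pos, by simp, by simp, ?_, ?_⟩
  · intro i _
    simp
  · intro i _
    exact ⟨fun _ => v, continuousOn_const, fun x _ => ⟨hderiv x, rfl⟩⟩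

theorem gLength_affine (f : ℂ → ℝ) (v a : ℂ) :
    gLength f (fun u : ℝ => u * v + a) (fun _ => v) = ‖v‖ * ∫ u in (0:ℝ)..1, f (u * v + a) := by
  rw [gLength, intervalIntegral.integral_mul_const, mul_comm]

theorem systole_le_norm_mul_integral_affine (hf : ∀ z, 0 ≤ f z) {v : ℂ} (hv : v ∈ L) (hv0 : v ≠ 0)
    (a : ℂ) : systole L f ≤ ‖v‖ * ∫ u in (0:ℝ)..1, f (u * v + a) := by
  rw [← gLength_affine]
  exact systole_le_gLength hf (isPiecewiseC1Path_affine v a) (by simpa using hv)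
    (by simpa using hv0)

theorem systole_le_norm_mul_integral_parallelogram (hf : Continuous f) (hf0 : ∀ z, 0 ≤ f z)
    {v : ℂ} (hv : v ∈ L) (hv0 : v ≠ 0) (w : ℂ) :
    systole L f ≤ ‖v‖ * ∫ s in (0:ℝ)..1, ∫ t in (0:ℝ)..1, f (s * v + t * w) := by
  have hF : Continuous (Function.uncurry fun s t : ℝ => f (s * v + t * w)) := by fun_prop
  have hF' : Continuous (Function.uncurry fun t s : ℝ => f (s * v + t * w)) := by fun_prop
  rw [intervalIntegral_intervalIntegral_swap
    (hF.continuousOn.integrableOn_compact (isCompact_uIcc.prod isCompact_uIcc) |>.mono_set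
      (Set.prod_mono Set.uIoc_subset_uIcc Set.uIoc_subset_uIcc))]
  calc systole L f = ∫ _ in (0:ℝ)..1, systole L f := by simp
    _ ≤ ∫ t in (0:ℝ)..1, ‖v‖ * ∫ s in (0:ℝ)..1, f (s * v + t * w) :=
      integral_mono_on zero_le_one intervalIntegrable_const
        ((continuous_const.mul
          (continuous_parametric_intervalIntegral_of_continuous' hF' 0 1)).intervalIntegrable 0 1)
        fun t _ => systole_le_norm_mul_integral_affine hf0 hv hv0 (t * w)
    _ = ‖v‖ * ∫ t in (0:ℝ)..1, ∫ s in (0:ℝ)..1, f (s * v + t * w) := integral_const_mul _ _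

end Systole

theorem loewner_torus_inequality_with_defect_sigma_general
    (τ : ℂ) (hτ : 0 < τ.im) (σ : ℝ) (hσ : σ = Real.sqrt τ.im)
    (L : Set ℂ)
    (hL : L = {z : ℂ | ∃ m n : ℤ, z = (m : ℂ) * ((σ : ℂ)⁻¹ * τ) + (n : ℂ) * (σ : ℂ)⁻¹})
    (f : ℂ → ℝ) (hf : Continuous f) (hfpos : ∀ z, 0 < f z)
    (area mean var : ℝ)
    (harea : area = ∫ s in (0:ℝ)..1, ∫ t in (0:ℝ)..1,
      (f ((s : ℂ) * (σ : ℂ)⁻¹ + (t : ℂ) * ((σ : ℂ)⁻¹ * τ))) ^ 2)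
    (hmean : mean = ∫ s in (0:ℝ)..1, ∫ t in (0:ℝ)..1,
      f ((s : ℂ) * (σ : ℂ)⁻¹ + (t : ℂ) * ((σ : ℂ)⁻¹ * τ)))
    (hvar : var = ∫ s in (0:ℝ)..1, ∫ t in (0:ℝ)..1,
      (f ((s : ℂ) * (σ : ℂ)⁻¹ + (t : ℂ) * ((σ : ℂ)⁻¹ * τ)) - mean) ^ 2) :
    area - σ ^ 2 * systole L f ^ 2 ≥ var := by
  have hσ0 : 0 < σ := hσ ▸ Real.sqrt_pos.2 hτ
  have hv : (σ : ℂ)⁻¹ ∈ L := hL ▸ ⟨0, 1, by simp⟩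
  have hsys := systole_le_norm_mul_integral_parallelogram hf (fun z => (hfpos z).le) hv
    (by simpa using hσ0.ne') ((σ : ℂ)⁻¹ * τ)
  rw [← hmean, norm_inv, Complex.norm_real, Real.norm_of_nonneg hσ0.le, inv_mul_eq_div,
    le_div_iff₀ hσ0] at hsys
  have hvar_eq : var = area - mean ^ 2 := by
    rw [hvar, harea, hmean]
    exact intervalIntegral_unitSquare_sub_mean_sq
      (F := fun s t => f ((s : ℂ) * (σ : ℂ)⁻¹ + (t : ℂ) * ((σ : ℂ)⁻¹ * τ))) (by fun_prop)
  have hsq : (systole L f * σ) ^ 2 ≤ mean ^ 2 :=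
    pow_le_pow_left₀ (mul_nonneg (systole_nonneg fun z => (hfpos z).le) hσ0.le) hsys 2
  linarith [hsq, hvar_eq]

/-- **Loewner's torus inequality with isosystolic defect, σ-version.**
For `τ` in the upper half plane, `σ = √(Im τ)`, and the unit-covolume lattice
`L = ℤ·(σ⁻¹τ) + ℤ·σ⁻¹ ⊂ ℂ`, every metric `g = f²(dx²+dy²)` with continuous positive
`L`-periodic conformal factor `f` satisfies `area(g) − σ²·sys(g)² ≥ var(f)`. -/
theorem loewner_torus_inequality_with_defect_sigma
    (τ : ℂ) (hτ : 0 < τ.im) (σ : ℝ) (hσ : σ = Real.sqrt τ.im)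
    (L : Set ℂ)
    (hL : L = {z : ℂ | ∃ m n : ℤ, z = (m : ℂ) * ((σ : ℂ)⁻¹ * τ) + (n : ℂ) * (σ : ℂ)⁻¹})
    (f : ℂ → ℝ) (hf : Continuous f) (hfpos : ∀ z, 0 < f z)
    (hper : ∀ z ∈ L, ∀ x : ℂ, f (x + z) = f x)
    (area mean var : ℝ)
    (harea : area = ∫ s in (0:ℝ)..1, ∫ t in (0:ℝ)..1,
      (f ((s : ℂ) * (σ : ℂ)⁻¹ + (t : ℂ) * ((σ : ℂ)⁻¹ * τ))) ^ 2)
    (hmean : mean = ∫ s in (0:ℝ)..1, ∫ t in (0:ℝ)..1,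
      f ((s : ℂ) * (σ : ℂ)⁻¹ + (t : ℂ) * ((σ : ℂ)⁻¹ * τ)))
    (hvar : var = ∫ s in (0:ℝ)..1, ∫ t in (0:ℝ)..1,
      (f ((s : ℂ) * (σ : ℂ)⁻¹ + (t : ℂ) * ((σ : ℂ)⁻¹ * τ)) - mean) ^ 2) :
    area - σ ^ 2 * systole L f ^ 2 ≥ var :=
  loewner_torus_inequality_with_defect_sigma_general τ hτ σ hσ L hL f hf hfpos area mean var harea
    hmean hvar
end

section
/- Let f : ℝ → ℝ be a continuous L-periodic function (f(t + L) = f(t) for a fixed L > 0) with f > 0, and let φ : ℝ → ℝ be a differentiable function satisfying φ′(ψ) = f(φ(ψ)) for all ψ and φ(0) = 0. Set b = ∫₀^L dt/f(t). Then φ(ψ + b) = φ(ψ) + L for all ψ ∈ ℝ; consequently the isothermal parametrization of the torus of revolution generated by an L-periodic unit-speed curve is doubly periodic with periods 2π in θ and b in ψ, so the torus is conformally equivalent to the flat torus defined by the rectangular lattice 2πℤ ⊕ bℤ. -/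
/-!
Substituting `t = φ s` in `∫ 1 / f` and using `φ' = f ∘ φ` gives `∫_{φ ψ}^{φ (ψ + b)} dt / f t = b`.
By `L`-periodicity of `f` the integral of `1 / f` over `[φ ψ, φ ψ + L]` is also `b`, and since
`x ↦ ∫_{φ ψ}^x dt / f t` is strictly increasing, `φ (ψ + b) = φ ψ + L`.
-/

open intervalIntegral

theorem strictMono_integral_of_pos {f : ℝ → ℝ} (hf : Continuous f) (hpos : ∀ t, 0 < f t) (a : ℝ) :
    StrictMono fun x => ∫ t in a..x, f t := by
  intro x y hxy
  have hint : ∀ u v : ℝ, IntervalIntegrable f MeasureTheory.volume u v :=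
    hf.intervalIntegrable
  have hsub : (∫ t in a..y, f t) - ∫ t in a..x, f t = ∫ t in x..y, f t :=
    integral_interval_sub_left (hint a y) (hint a x)
  have hxy_pos : 0 < ∫ t in x..y, f t :=
    intervalIntegral_pos_of_pos_on (hint x y) (fun t _ => hpos t) hxy
  linarith

theorem integral_one_div_comp_of_hasDerivAt {f φ : ℝ → ℝ} (hf : Continuous f)
    (hf0 : ∀ t, f t ≠ 0) (hφ : ∀ ψ, HasDerivAt φ (f (φ ψ)) ψ) (a b : ℝ) :
    ∫ t in φ a..φ b, 1 / f t = b - a := by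
  have hφc : Continuous φ := continuous_iff_continuousAt.2 fun ψ => (hφ ψ).continuousAt
  have hinv : Continuous fun t => 1 / f t := continuous_const.div hf hf0
  rw [← integral_comp_mul_deriv (fun ψ _ => hφ ψ) (hf.comp hφc).continuousOn hinv]
  simp [hf0]

theorem add_integral_one_div_of_hasDerivAt {f φ : ℝ → ℝ} {L : ℝ} (hf : Continuous f)
    (hpos : ∀ t, 0 < f t) (hper : Function.Periodic f L) (hφ : ∀ ψ, HasDerivAt φ (f (φ ψ)) ψ)
    (ψ : ℝ) : φ (ψ + ∫ t in (0:ℝ)..L, 1 / f t) = φ ψ + L := by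
  have hf0 : ∀ t, f t ≠ 0 := fun t => (hpos t).ne'
  have hper' : Function.Periodic (fun t => 1 / f t) L := fun t => by simp only [hper t]
  have hinv : Continuous fun t => 1 / f t := continuous_const.div hf hf0
  apply (strictMono_integral_of_pos hinv (fun t => one_div_pos.2 (hpos t)) (φ ψ)).injective
  dsimp only
  rw [integral_one_div_comp_of_hasDerivAt hf hf0 hφ, hper'.intervalIntegral_add_eq (φ ψ) 0,
    zero_add, add_sub_cancel_left]

theorem torus_of_revolution_conformal_type_general
    (L : ℝ)
    (f g : ℝ → ℝ) (hf : Continuous f)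
    (hfper : ∀ t : ℝ, f (t + L) = f t) (hgper : ∀ t : ℝ, g (t + L) = g t)
    (hfpos : ∀ t, 0 < f t)
    (φ : ℝ → ℝ) (hφ : ∀ ψ : ℝ, HasDerivAt φ (f (φ ψ)) ψ)
    (b : ℝ) (hb : b = ∫ t in (0:ℝ)..L, 1 / f t)
    (X : ℝ → ℝ → EuclideanSpace ℝ (Fin 3))
    (hX : ∀ θ ψ : ℝ, X θ ψ = (WithLp.equiv 2 (Fin 3 → ℝ)).symm
      ![f (φ ψ) * Real.cos θ, f (φ ψ) * Real.sin θ, g (φ ψ)]) :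
    (∀ ψ : ℝ, φ (ψ + b) = φ ψ + L) ∧
    (∀ θ ψ : ℝ, X (θ + 2 * Real.pi) ψ = X θ ψ) ∧
    (∀ θ ψ : ℝ, X θ (ψ + b) = X θ ψ) := by
  have hφper : ∀ ψ, φ (ψ + b) = φ ψ + L :=
    hb ▸ add_integral_one_div_of_hasDerivAt hf hfpos hfper hφ
  refine ⟨hφper, fun θ ψ => ?_, fun θ ψ => ?_⟩
  · rw [hX, hX, Real.cos_add_two_pi, Real.sin_add_two_pi]
  · rw [hX, hX, hφper, hfper, hgper]

/-- **Conformal type of a torus of revolution.**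
Let `(f, g)` be an `L`-periodic unit-speed generating curve with `f > 0`, and let `φ` solve
`φ'(ψ) = f(φ(ψ))`, `φ(0) = 0`. With `b = ∫₀ᴸ dt/f(t)`, we have `φ(ψ + b) = φ(ψ) + L` for
all `ψ`; consequently the isothermal parametrization
`X(θ,ψ) = (f(φψ)cos θ, f(φψ)sin θ, g(φψ))` is doubly periodic with periods `2π` in `θ` and
`b` in `ψ`, so the torus of revolution is conformally equivalent to the flat torus of the
rectangular lattice `2πℤ ⊕ bℤ`. -/
theorem torus_of_revolution_conformal_type
    (L : ℝ) (hL : 0 < L)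
    (f g : ℝ → ℝ) (hf : Continuous f)
    (hfper : ∀ t : ℝ, f (t + L) = f t) (hgper : ∀ t : ℝ, g (t + L) = g t)
    (hfpos : ∀ t, 0 < f t)
    (φ : ℝ → ℝ) (hφ : ∀ ψ : ℝ, HasDerivAt φ (f (φ ψ)) ψ) (hφ0 : φ 0 = 0)
    (b : ℝ) (hb : b = ∫ t in (0:ℝ)..L, 1 / f t)
    (X : ℝ → ℝ → EuclideanSpace ℝ (Fin 3))
    (hX : ∀ θ ψ : ℝ, X θ ψ = (WithLp.equiv 2 (Fin 3 → ℝ)).symm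
      ![f (φ ψ) * Real.cos θ, f (φ ψ) * Real.sin θ, g (φ ψ)]) :
    (∀ ψ : ℝ, φ (ψ + b) = φ ψ + L) ∧
    (∀ θ ψ : ℝ, X (θ + 2 * Real.pi) ψ = X θ ψ) ∧
    (∀ θ ψ : ℝ, X θ (ψ + b) = X θ ψ) :=
  torus_of_revolution_conformal_type_general L f g hf hfper hgper hfpos φ hφ b hb X hX
end
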